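/- arXiv:2603.21049 — 3 statements merged into one kernel-verified Lean document; each statement's English description precedes it below -/
import Mathlib

section
/- Let F_n(x) be the Fibonacci polynomials defined by F_0(x)=0, F_1(x)=1, and F_{n+1}(x)=x F_n(x)+F_{n-1}(x) for n≥1. Then for every n≥1 and every nonzero x in a field, F_n(x - 1/x) = x^{n-1} * (1 + (-x^{-2}) + (-x^{-2})^2 + ... + (-x^{-2})^{n-1}). -/
/-!
Factor the characteristic polynomial `T² - tT - 1` of the Fibonacci recurrence as
`(T - a)(T - b)` with `a + b = t` and `ab = -1`. The sums `∑_{i<n} aⁱ b^(n-1-i)` obey the same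
recurrence and initial values, so they are the Fibonacci polynomials at `a + b`. For
`t = x - 1/x` take `a = -x⁻¹`, `b = x`: the sum becomes `x^(n-1) ∑_{i<n} (-x⁻²)ⁱ`.
-/

open Finset

/-- Fibonacci polynomials evaluated at `x`: `F 0 = 0`, `F 1 = 1`,
`F (n+2) = x * F (n+1) + F n`. -/
def fibPoly {K : Type*} [Field K] (x : K) : ℕ → K
  | 0 => 0
  | 1 => 1
  | n + 2 => x * fibPoly x (n + 1) + fibPoly x n

theorem geom_sum₂_add_two {R : Type*} [CommRing R] (a b : R) (n : ℕ) :
    ∑ i ∈ range (n + 2), a ^ i * b ^ (n + 1 - i) =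
      (a + b) * ∑ i ∈ range (n + 1), a ^ i * b ^ (n - i) -
        a * b * ∑ i ∈ range n, a ^ i * b ^ (n - 1 - i) := by
  have h₁ := geom_sum₂_succ_eq a b (n := n)
  have h₂ := geom_sum₂_succ_eq a b (n := n + 1)
  simp only [Nat.add_sub_cancel] at h₂
  linear_combination h₂ - a * h₁

theorem fibPoly_add_two {K : Type*} [Field K] (x : K) (n : ℕ) :
    fibPoly x (n + 2) = x * fibPoly x (n + 1) + fibPoly x n :=
  rfl

theorem fibPoly_add_eq_geom_sum₂ {K : Type*} [Field K] {a b : K} (hab : a * b = -1) (n : ℕ) :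
    fibPoly (a + b) n = ∑ i ∈ range n, a ^ i * b ^ (n - 1 - i) := by
  induction n using Nat.twoStepInduction with
  | zero => rfl
  | one => simp [fibPoly]
  | more n ih₀ ih₁ =>
    rw [fibPoly_add_two, ih₀, ih₁, show n + 2 - 1 = n + 1 by omega, Nat.add_sub_cancel,
      geom_sum₂_add_two, hab]
    ring

theorem fibPoly_q_analogue_general {K : Type*} [Field K] (x : K) (hx : x ≠ 0)
    (n : ℕ) :
    fibPoly (x - 1 / x) n = x ^ (n - 1) * ∑ k ∈ Finset.range n, (-(x⁻¹ ^ 2)) ^ k := by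
  have hprod : -x⁻¹ * x = -1 := by rw [neg_mul, inv_mul_cancel₀ hx]
  rw [show x - 1 / x = -x⁻¹ + x by ring, fibPoly_add_eq_geom_sum₂ hprod, mul_sum]
  refine sum_congr rfl fun i hi => ?_
  have hsplit : x ^ (n - 1) = x ^ (n - 1 - i) * x ^ i :=
    (pow_sub_mul_pow x (Nat.le_sub_one_of_lt (mem_range.mp hi))).symm
  have hbase : x * -(x⁻¹ ^ 2) = -x⁻¹ := by field_simp
  rw [hsplit, mul_assoc, ← mul_pow, hbase, mul_comm]

theorem fibPoly_q_analogue {K : Type*} [Field K] (x : K) (hx : x ≠ 0)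
    (n : ℕ) (hn : 1 ≤ n) :
    fibPoly (x - 1 / x) n = x ^ (n - 1) * ∑ k ∈ Finset.range n, (-(x⁻¹ ^ 2)) ^ k :=
  fibPoly_q_analogue_general x hx n
end

section
/- Let n ≥ 1 and let m₁,…,mₙ be integers. In a field K with invertible element u and d ∈ K, let L = [[1,0],[d,0]] and L* = [[1,−d],[0,0]]. Then the scalar [1 0]·(u^{mₙ}L − u^{−mₙ}L*)···(u^{m₁}L − u^{−m₁}L*)·L·(1,0)ᵀ equals Σ_{S ⊆ {1,…,n}} (∏_{k∉S} u^{m_k})·(∏_{k∈S} (−u^{−m_k}))·(1−d²)^{|I(S)|}, where I(S) is the set of maximal intervals (maximal runs of consecutive integers) of S. -/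
/-- The number of maximal runs of consecutive integers in `S`, counted by their
right endpoints. -/
def numIntervals (S : Finset ℕ) : ℕ := (S.filter fun k => k + 1 ∉ S).card

namespace LRCaux

lemma numIntervals_insert_succ {S : Finset ℕ} {n : ℕ} (hS : ∀ k ∈ S, k ≤ n) :
    numIntervals (insert (n + 1) S) = numIntervals S + (if n ∈ S then 0 else 1) := by
  have hnS : n + 1 ∉ S := fun h => by have := hS _ h; omega
  have h1 : (insert (n + 1) S).filter (fun k => k + 1 ∉ insert (n + 1) S)
      = insert (n + 1) (S.filter fun k => k + 1 ∉ insert (n + 1) S) := by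
    rw [Finset.filter_insert, if_pos]
    simp only [Finset.mem_insert, not_or]
    exact ⟨by omega, fun h => by have := hS _ h; omega⟩
  have h2 : (S.filter fun k => k + 1 ∉ insert (n + 1) S)
      = (S.filter fun k => k + 1 ∉ S).erase n := by
    ext k
    simp only [Finset.mem_filter, Finset.mem_erase, Finset.mem_insert, not_or]
    constructor
    · rintro ⟨hk, hne, hk1⟩
      exact ⟨by omega, hk, hk1⟩
    · rintro ⟨hne, hk, hk1⟩
      exact ⟨hk, by omega, hk1⟩
  unfold numIntervals
  rw [h1, Finset.card_insert_of_notMem (by simp [hnS]), h2]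
  by_cases hn : n ∈ S
  · have hmem : n ∈ S.filter fun k => k + 1 ∉ S := by
      simp [Finset.mem_filter, hn, hnS]
    rw [Finset.card_erase_of_mem hmem, if_pos hn]
    have : 1 ≤ (S.filter fun k => k + 1 ∉ S).card := Finset.card_pos.mpr ⟨n, hmem⟩
    omega
  · rw [Finset.erase_eq_of_notMem (by simp [hn]), if_neg hn]

variable {K : Type*} [Field K]

/-- The matrix product appearing in the theorem. -/
def lrcP (u d : K) (m : ℕ → ℤ) (n : ℕ) : Matrix (Fin 2) (Fin 2) K :=
  ((List.range n).map fun j =>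
      u ^ m (n - j) • (!![1, 0; d, 0] : Matrix (Fin 2) (Fin 2) K)
        - u ^ (-m (n - j)) • !![1, -d; 0, 0]).prod * !![1, 0; d, 0]

lemma lrcP_zero (u d : K) (m : ℕ → ℤ) : lrcP u d m 0 = !![1, 0; d, 0] := by
  simp [lrcP]

lemma lrcP_succ (u d : K) (m : ℕ → ℤ) (n : ℕ) :
    lrcP u d m (n + 1)
      = (u ^ m (n + 1) • (!![1, 0; d, 0] : Matrix (Fin 2) (Fin 2) K)
          - u ^ (-m (n + 1)) • !![1, -d; 0, 0]) * lrcP u d m n := by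
  unfold lrcP
  rw [List.range_succ_eq_map, List.map_cons, List.prod_cons, List.map_map, mul_assoc]
  have hfun : ∀ j ∈ List.range n,
      ((fun j => u ^ m (n + 1 - j) • (!![1, 0; d, 0] : Matrix (Fin 2) (Fin 2) K)
          - u ^ (-m (n + 1 - j)) • !![1, -d; 0, 0]) ∘ Nat.succ) j
        = u ^ m (n - j) • (!![1, 0; d, 0] : Matrix (Fin 2) (Fin 2) K)
          - u ^ (-m (n - j)) • !![1, -d; 0, 0] := by
    intro j hj
    simp [Nat.succ_sub_succ]
  rw [List.map_congr_left hfun]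
  norm_num

lemma key (u d : K) (m : ℕ → ℤ) (n : ℕ) :
    lrcP u d m n 0 0 = (∑ S ∈ (Finset.Icc 1 n).powerset,
        (∏ k ∈ Finset.Icc 1 n \ S, u ^ m k) * (∏ k ∈ S, -(u ^ (-m k))) *
          (1 - d ^ 2) ^ numIntervals S)
    ∧ lrcP u d m n 1 0 = (∑ S ∈ (Finset.Icc 1 n).powerset,
        (∏ k ∈ Finset.Icc 1 n \ S, u ^ m k) * (∏ k ∈ S, -(u ^ (-m k))) *
          (1 - d ^ 2) ^ numIntervals S * (if n ∈ S then 0 else d)) := by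
  induction n with
  | zero =>
    constructor <;> simp [lrcP_zero, numIntervals]
  | succ n ih =>
    obtain ⟨ha, hb⟩ := ih
    set p : K := 1 - d ^ 2 with hp
    set a : K := lrcP u d m n 0 0 with hadef
    set b : K := lrcP u d m n 1 0 with hbdef
    have hIcc : Finset.Icc 1 (n + 1) = insert (n + 1) (Finset.Icc 1 n) := by
      ext k; simp [Finset.mem_Icc]; omega
    have hnotmem : n + 1 ∉ Finset.Icc 1 n := by simp
    -- entries of the new product
    have e00 : lrcP u d m (n + 1) 0 0
        = (u ^ m (n + 1) - u ^ (-m (n + 1))) * a + u ^ (-m (n + 1)) * d * b := by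
      rw [lrcP_succ, Matrix.mul_apply, Fin.sum_univ_two]
      simp [← hadef, ← hbdef]
    have e10 : lrcP u d m (n + 1) 1 0 = u ^ m (n + 1) * d * a := by
      rw [lrcP_succ, Matrix.mul_apply, Fin.sum_univ_two]
      simp [← hadef, ← hbdef]
    -- per-subset computations
    have key0 : ∀ S ∈ (Finset.Icc 1 n).powerset,
        (∏ k ∈ insert (n + 1) (Finset.Icc 1 n) \ S, u ^ m k) * (∏ k ∈ S, -(u ^ (-m k))) *
            p ^ numIntervals S
          = u ^ m (n + 1) *
            ((∏ k ∈ Finset.Icc 1 n \ S, u ^ m k) * (∏ k ∈ S, -(u ^ (-m k))) *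
              p ^ numIntervals S) := by
      intro S hS
      rw [Finset.mem_powerset] at hS
      have hnS : n + 1 ∉ S := fun h => hnotmem (hS h)
      have hsd : insert (n + 1) (Finset.Icc 1 n) \ S = insert (n + 1) (Finset.Icc 1 n \ S) :=
        Finset.insert_sdiff_of_notMem _ hnS
      rw [hsd, Finset.prod_insert (by simp [hnotmem])]
      ring
    have key1 : ∀ S ∈ (Finset.Icc 1 n).powerset,
        (∏ k ∈ insert (n + 1) (Finset.Icc 1 n) \ insert (n + 1) S, u ^ m k) *
            (∏ k ∈ insert (n + 1) S, -(u ^ (-m k))) *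
            p ^ numIntervals (insert (n + 1) S)
          = -(u ^ (-m (n + 1))) *
            ((∏ k ∈ Finset.Icc 1 n \ S, u ^ m k) * (∏ k ∈ S, -(u ^ (-m k))) *
              p ^ numIntervals S * (if n ∈ S then 1 else p)) := by
      intro S hS
      rw [Finset.mem_powerset] at hS
      have hSle : ∀ k ∈ S, k ≤ n := fun k hk => (Finset.mem_Icc.mp (hS hk)).2
      have hnS : n + 1 ∉ S := fun h => hnotmem (hS h)
      have hsd : insert (n + 1) (Finset.Icc 1 n) \ insert (n + 1) S = Finset.Icc 1 n \ S := by
        ext k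
        simp only [Finset.mem_sdiff, Finset.mem_Icc, Finset.mem_insert, not_or]
        constructor
        · rintro ⟨hk1 | hk1, hne, hk⟩
          · exact absurd hk1 hne
          · exact ⟨hk1, hk⟩
        · rintro ⟨⟨h1, h2⟩, hk⟩
          exact ⟨Or.inr ⟨h1, h2⟩, by omega, hk⟩
      rw [hsd, Finset.prod_insert hnS, numIntervals_insert_succ hSle]
      by_cases hn : n ∈ S <;> simp [hn, pow_succ] <;> ring
    -- now compute both entries
    rw [hIcc]
    constructor
    · rw [e00, Finset.sum_powerset_insert hnotmem,
        Finset.sum_congr rfl key0, Finset.sum_congr rfl key1,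
        ← Finset.mul_sum, ← Finset.mul_sum, ← ha]
      have hsum : ∑ S ∈ (Finset.Icc 1 n).powerset,
          (∏ k ∈ Finset.Icc 1 n \ S, u ^ m k) * (∏ k ∈ S, -(u ^ (-m k))) *
            p ^ numIntervals S * (if n ∈ S then 1 else p)
          = a - d * b := by
        rw [ha, hb, Finset.mul_sum, ← Finset.sum_sub_distrib]
        refine Finset.sum_congr rfl fun S hS => ?_
        by_cases hn : n ∈ S <;> simp [hn, hp] <;> ring
      rw [hsum]
      ring
    · rw [e10, Finset.sum_powerset_insert hnotmem]
      have z1 : ∀ S ∈ (Finset.Icc 1 n).powerset,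
          (∏ k ∈ insert (n + 1) (Finset.Icc 1 n) \ insert (n + 1) S, u ^ m k) *
              (∏ k ∈ insert (n + 1) S, -(u ^ (-m k))) *
              p ^ numIntervals (insert (n + 1) S) *
              (if n + 1 ∈ insert (n + 1) S then 0 else d) = 0 := by
        intro S hS
        simp
      rw [Finset.sum_congr rfl z1, Finset.sum_const_zero, add_zero]
      have z0 : ∀ S ∈ (Finset.Icc 1 n).powerset,
          (∏ k ∈ insert (n + 1) (Finset.Icc 1 n) \ S, u ^ m k) * (∏ k ∈ S, -(u ^ (-m k))) *
              p ^ numIntervals S * (if n + 1 ∈ S then 0 else d)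
            = u ^ m (n + 1) * d *
              ((∏ k ∈ Finset.Icc 1 n \ S, u ^ m k) * (∏ k ∈ S, -(u ^ (-m k))) *
                p ^ numIntervals S) := by
        intro S hS
        have hnS : n + 1 ∉ S := fun h =>
          hnotmem ((Finset.mem_powerset.mp hS) h)
        rw [if_neg hnS, key0 S hS]
        ring
      rw [Finset.sum_congr rfl z0, ← Finset.mul_sum, ← ha]

end LRCaux

theorem lawrence_rosenstein_expansion {K : Type*} [Field K] (u d : K) (hu : u ≠ 0)
    (n : ℕ) (hn : 1 ≤ n) (m : ℕ → ℤ) :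
    let L : Matrix (Fin 2) (Fin 2) K := !![1, 0; d, 0]
    let Ls : Matrix (Fin 2) (Fin 2) K := !![1, -d; 0, 0]
    (((List.range n).map fun j =>
        u ^ m (n - j) • L - u ^ (-m (n - j)) • Ls).prod * L) 0 0 =
      ∑ S ∈ (Finset.Icc 1 n).powerset,
        (∏ k ∈ Finset.Icc 1 n \ S, u ^ m k) * (∏ k ∈ S, -(u ^ (-m k))) *
          (1 - d ^ 2) ^ numIntervals S := by
  intro L Ls
  show LRCaux.lrcP u d m n 0 0 = _
  exact (LRCaux.key u d m n).1
end

section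
/- Let a₁, …, aₙ be positive integers and let i be a square root of −1 in a field of characteristic 0. Define κₙ by the matrix product (κₙ, κₙ₋₁)ᵀ = [[(−1)^{n−1} i aₙ, 1],[1,0]]···[[i a₁, 1],[1,0]]·(1, 0)ᵀ. Then κₙ = (−1)^{C(n,2)}·iⁿ·q, where q is the numerant (continuant) of the continued fraction [a₁, a₂, …, aₙ], i.e., q is defined by q₀ = 1, q₁ = a₁, q_k = a_k·q_{k−1} + q_{k−2}. -/
theorem kappa_continuant {K : Type*} [Field K] [CharZero K] (i : K) (hi : i ^ 2 = -1)
    (n : ℕ) (hn : 1 ≤ n) (a : ℕ → ℕ) (ha : ∀ k, 1 ≤ k → k ≤ n → 0 < a k)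
    (q : ℕ → ℕ) (hq0 : q 0 = 1) (hq1 : q 1 = a 1)
    (hq : ∀ k, 2 ≤ k → q k = a k * q (k - 1) + q (k - 2)) :
    ((((List.range n).map fun j =>
        (!![(-1 : K) ^ (n - j - 1) * i * (a (n - j) : K), 1; 1, 0]
          : Matrix (Fin 2) (Fin 2) K)).prod).mulVec ![1, 0]) 0 =
      (-1 : K) ^ n.choose 2 * i ^ n * (q n : K) := by
  set P : ℕ → Matrix (Fin 2) (Fin 2) K := fun m =>
    ((List.range m).map fun j =>
      (!![(-1 : K) ^ (m - j - 1) * i * (a (m - j) : K), 1; 1, 0]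
        : Matrix (Fin 2) (Fin 2) K)).prod with hP
  have key : ∀ m : ℕ, (P (m+1)).mulVec ![1,0] =
      (!![(-1:K)^m * i * (a (m+1) : K), 1; 1, 0]).mulVec ((P m).mulVec ![1,0]) := by
    intro m
    have hsplit : P (m+1) = !![(-1:K)^m * i * (a (m+1) : K), 1; 1, 0] * P m := by
      simp only [hP]
      rw [List.range_succ_eq_map, List.map_cons, List.prod_cons, List.map_map]
      have h1 : ((fun j =>
          (!![(-1 : K) ^ (m+1 - j - 1) * i * (a (m+1 - j) : K), 1; 1, 0]
            : Matrix (Fin 2) (Fin 2) K)) ∘ Nat.succ) = fun j =>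
          (!![(-1 : K) ^ (m - j - 1) * i * (a (m - j) : K), 1; 1, 0]
            : Matrix (Fin 2) (Fin 2) K) := by
        funext j
        simp only [Function.comp_apply, Nat.succ_eq_add_one, Nat.add_sub_add_right]
      rw [h1]
      norm_num
    rw [hsplit, ← Matrix.mulVec_mulVec]
  have main : ∀ m : ℕ, 1 ≤ m →
      ((P m).mulVec ![1,0]) 0 = (-1:K) ^ m.choose 2 * i ^ m * (q m : K) ∧
      ((P m).mulVec ![1,0]) 1 = (-1:K) ^ (m-1).choose 2 * i ^ (m-1) * (q (m-1) : K) := by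
    intro m hm
    induction m, hm using Nat.le_induction with
    | base =>
      constructor <;>
        simp [hP, List.range_succ, Matrix.mulVec, dotProduct, Fin.sum_univ_two,
          hq0, hq1]
    | succ m hm ih =>
      obtain ⟨l, rfl⟩ : ∃ l, m = l + 1 := ⟨m - 1, by omega⟩
      obtain ⟨ih0, ih1⟩ := ih
      rw [key]
      have hqr : (q (l + 2) : K) = (a (l+2) : K) * q (l+1) + q l := by
        have := hq (l+2) (by omega)
        simp only [Nat.add_sub_cancel] at this
        norm_num [this]
      have hc1 : (l+1).choose 2 = l.choose 2 + l := by
        simp [Nat.choose_succ_succ]; omega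
      have hc2 : (l+2).choose 2 = l.choose 2 + (2*l+1) := by
        simp [Nat.choose_succ_succ]; omega
      simp only [Nat.add_sub_cancel] at ih1 ⊢
      set v : Fin 2 → K := (P (l+1)).mulVec ![1,0] with hv
      constructor
      · show ((!![(-1:K)^(l+1) * i * (a (l+2) : K), 1; 1, 0]).mulVec v) 0 = _
        have he : ((-1:K)^l)^2 = 1 := by
          rw [← pow_mul, mul_comm, pow_mul]; norm_num
        have hs1 : (-1:K)^((l+1).choose 2) = (-1:K)^(l.choose 2) * (-1:K)^l := by
          rw [hc1, pow_add]
        have hs2 : (-1:K)^((l+2).choose 2) = -(-1:K)^(l.choose 2) := by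
          rw [hc2, pow_add]; norm_num [pow_succ, pow_mul]
        have hi1 : i^(l+1) = i^l * i := pow_succ i l
        have hi2 : i^(l+2) = -i^l := by rw [pow_add, hi, mul_neg_one]
        simp [Matrix.mulVec, dotProduct, Fin.sum_univ_two]
        rw [ih0, ih1, hqr, show l+1+1 = l+2 from rfl, hs1, hi1, hs2, hi2]
        linear_combination (-((-1:K)^(l.choose 2) * i^l * (a (l+2) : K) * (q (l+1) : K) * ((-1:K)^l)^2)) * hi
          + ((-1:K)^(l.choose 2) * i^l * (a (l+2) : K) * (q (l+1) : K)) * he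
      · show ((!![(-1:K)^(l+1) * i * (a (l+2) : K), 1; 1, 0]).mulVec v) 1 = _
        simp [Matrix.mulVec, dotProduct, Fin.sum_univ_two]
        rw [ih0]
  exact (main n hn).1
end
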